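/- If two metrics g and g̃ in boundary normal coordinates satisfy g^{in} = g̃^{in} = δ_{in} and the eikonal boundary values ω_n = (1 - g^{αβ}ω_αω_β)^{1/2}, ω̃_n = (1 - g̃^{αβ}ω_αω_β)^{1/2} satisfy ‖ω_n - ω̃_n‖_{L²(V)} ≤ δ for every tangential covector ω' in a set of directions satisfying the hypothesis of the directional-recovery lemma, then ‖g - g̃‖_{L²(V)} ≤ Cδ for a constant C depending only on a priori bounds on the metrics. -/

import Mathlib

/-!
At each point the recovery hypothesis supplies a direction `ω'` with
`|g^{αβ} - g̃^{αβ}| ≤ C₀ |(g^{αβ} - g̃^{αβ}) ω_α ω_β| = C₀ |ω̃_n² - ω_n²|`,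
and `|ω̃_n² - ω_n²| ≤ 2 S |ω_n - ω̃_n|` where `S` bounds both eikonal values a priori.
Since the direction depends on the point, the square of the right-hand side is bounded by the sum
over all directions, which integrates over `V` to at most a constant times `δ²`.
-/

open MeasureTheory
open scoped BigOperators

noncomputable section

/-- The eikonal boundary value `ω_n = (1 - g^{αβ}ω_αω_β)^{1/2}` at `x` for the
tangential direction `ω`, where `ginv x = (g^{αβ}(x))`. -/
def omegaN {d m : ℕ} (ginv : (Fin d → ℝ) → Matrix (Fin m) (Fin m) ℝ)
    (ω : Fin m → ℝ) (x : Fin d → ℝ) : ℝ :=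
  Real.sqrt (1 - ∑ α : Fin m, ∑ β : Fin m, ginv x α β * ω α * ω β)

def quadForm {ι : Type*} [Fintype ι] (G : Matrix ι ι ℝ) (v : ι → ℝ) : ℝ :=
  ∑ α, ∑ β, G α β * v α * v β

section QuadForm

variable {ι : Type*} [Fintype ι]

theorem quadForm_sub (G H : Matrix ι ι ℝ) (v : ι → ℝ) :
    quadForm (G - H) v = quadForm G v - quadForm H v := by
  simp only [quadForm, Matrix.sub_apply, sub_mul, Finset.sum_sub_distrib]

theorem abs_quadForm_le {G : Matrix ι ι ℝ} {A : ℝ} (hG : ∀ α β, |G α β| ≤ A) (v : ι → ℝ) :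
    |quadForm G v| ≤ A * (∑ α, |v α|) ^ 2 := by
  calc |quadForm G v| ≤ ∑ α, ∑ β, |G α β * v α * v β| :=
        (Finset.abs_sum_le_sum_abs _ _).trans (Finset.sum_le_sum fun α _ ↦
          Finset.abs_sum_le_sum_abs _ _)
    _ ≤ ∑ α, ∑ β, A * (|v α| * |v β|) := by
        gcongr with α _ β _
        rw [abs_mul, abs_mul, mul_assoc]
        exact mul_le_mul_of_nonneg_right (hG α β) (by positivity)
    _ = A * (∑ α, |v α|) ^ 2 := by
        rw [sq, Finset.sum_mul_sum, Finset.mul_sum]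
        simp only [Finset.mul_sum]

theorem sum_sum_sq_le {M : Matrix ι ι ℝ} {r : ℝ} (hM : ∀ α β, |M α β| ≤ r) :
    ∑ α, ∑ β, M α β ^ 2 ≤ (Fintype.card ι : ℝ) ^ 2 * r ^ 2 := by
  calc ∑ α, ∑ β, M α β ^ 2 ≤ ∑ _α : ι, ∑ _β : ι, r ^ 2 :=
        Finset.sum_le_sum fun α _ ↦ Finset.sum_le_sum fun β _ ↦
          sq_le_sq.2 ((hM α β).trans (le_abs_self r))
    _ = (Fintype.card ι : ℝ) ^ 2 * r ^ 2 := by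
        simp only [Finset.sum_const, Finset.card_univ, nsmul_eq_mul]; ring

end QuadForm

theorem sq_sub_sq_sq_le {u v S : ℝ} (hu : 0 ≤ u) (hv : 0 ≤ v) (huS : u ≤ S) (hvS : v ≤ S) :
    (u ^ 2 - v ^ 2) ^ 2 ≤ (2 * S) ^ 2 * (u - v) ^ 2 := by
  have hsum : (u + v) ^ 2 ≤ (2 * S) ^ 2 := pow_le_pow_left₀ (by positivity) (by linarith) 2
  calc (u ^ 2 - v ^ 2) ^ 2 = (u + v) ^ 2 * (u - v) ^ 2 := by ring
    _ ≤ (2 * S) ^ 2 * (u - v) ^ 2 := by gcongr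

def omegaNBound {m : ℕ} (A : ℝ) (v : Fin m → ℝ) : ℝ :=
  Real.sqrt (1 + A * (∑ α, |v α|) ^ 2)

section OmegaN

variable {d m : ℕ} {ginv ginv' : (Fin d → ℝ) → Matrix (Fin m) (Fin m) ℝ} {x : Fin d → ℝ}

theorem omegaN_nonneg (v : Fin m → ℝ) : 0 ≤ omegaN ginv v x := Real.sqrt_nonneg _

theorem omegaN_le_omegaNBound {A : ℝ} (hA : ∀ α β, |ginv x α β| ≤ A) (v : Fin m → ℝ) :
    omegaN ginv v x ≤ omegaNBound A v := by
  have hq : -(A * (∑ α, |v α|) ^ 2) ≤ quadForm (ginv x) v := (abs_le.1 (abs_quadForm_le hA v)).1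
  exact Real.sqrt_le_sqrt (by unfold quadForm at hq; linarith)

theorem sq_omegaN {v : Fin m → ℝ} (hv : quadForm (ginv x) v ≤ 1) :
    omegaN ginv v x ^ 2 = 1 - quadForm (ginv x) v :=
  Real.sq_sqrt (sub_nonneg.2 hv)

theorem measurable_omegaN (hmeas : ∀ α β, Measurable fun x ↦ ginv x α β) (v : Fin m → ℝ) :
    Measurable (omegaN ginv v) := by
  unfold omegaN
  fun_prop

theorem integrableOn_sq_sub_omegaN {μ : Measure (Fin d → ℝ)} {V : Set (Fin d → ℝ)}
    (hV : MeasurableSet V) (hVfin : μ V ≠ ⊤) {A : ℝ}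
    (hmeas : ∀ α β, Measurable fun x ↦ ginv x α β)
    (hmeas' : ∀ α β, Measurable fun x ↦ ginv' x α β)
    (hbound : ∀ x ∈ V, ∀ α β, |ginv x α β| ≤ A)
    (hbound' : ∀ x ∈ V, ∀ α β, |ginv' x α β| ≤ A) (v : Fin m → ℝ) :
    IntegrableOn (fun x ↦ (omegaN ginv v x - omegaN ginv' v x) ^ 2) V μ := by
  refine Measure.integrableOn_of_bounded (M := omegaNBound A v ^ 2) hVfin
    (((measurable_omegaN hmeas v).sub (measurable_omegaN hmeas' v)).pow_const 2).aestronglyMeasurable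
    (ae_restrict_of_forall_mem hV fun x hx ↦ ?_)
  have hu := omegaN_le_omegaNBound (hbound x hx) v
  have hv := omegaN_le_omegaNBound (hbound' x hx) v
  have hu0 := omegaN_nonneg (ginv := ginv) (x := x) v
  have hv0 := omegaN_nonneg (ginv := ginv') (x := x) v
  rw [Real.norm_eq_abs, abs_sq]
  nlinarith

theorem sum_sq_sub_le_sum_sq_sub_omegaN {N : ℕ} {A C₀ : ℝ} {ω : Fin N → Fin m → ℝ}
    (hsym : (ginv x).IsSymm) (hsym' : (ginv' x).IsSymm)
    (hbound : ∀ α β, |ginv x α β| ≤ A) (hbound' : ∀ α β, |ginv' x α β| ≤ A)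
    (hell : ∀ k, quadForm (ginv x) (ω k) ≤ 1) (hell' : ∀ k, quadForm (ginv' x) (ω k) ≤ 1)
    (hrecover : ∀ h : Matrix (Fin m) (Fin m) ℝ, h.IsSymm →
      ∃ k, ∀ α β, |h α β| ≤ C₀ * |quadForm h (ω k)|) :
    ∑ α, ∑ β, (ginv x α β - ginv' x α β) ^ 2 ≤
      ∑ k, (2 * m * C₀ * omegaNBound A (ω k)) ^ 2 *
        (omegaN ginv (ω k) x - omegaN ginv' (ω k) x) ^ 2 := by
  obtain ⟨k, hk⟩ := hrecover _ (hsym.sub hsym')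
  set u := omegaN ginv (ω k) x
  set v := omegaN ginv' (ω k) x
  have hq : quadForm (ginv x - ginv' x) (ω k) = -(u ^ 2 - v ^ 2) := by
    rw [quadForm_sub, sq_omegaN (hell k), sq_omegaN (hell' k)]; ring
  have huv : (u ^ 2 - v ^ 2) ^ 2 ≤ (2 * omegaNBound A (ω k)) ^ 2 * (u - v) ^ 2 :=
    sq_sub_sq_sq_le (omegaN_nonneg _) (omegaN_nonneg _)
      (omegaN_le_omegaNBound hbound _) (omegaN_le_omegaNBound hbound' _)
  calc ∑ α, ∑ β, (ginv x α β - ginv' x α β) ^ 2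
      ≤ (m : ℝ) ^ 2 * (C₀ * |quadForm (ginv x - ginv' x) (ω k)|) ^ 2 := by
        simpa using sum_sum_sq_le hk
    _ = (m * C₀) ^ 2 * (u ^ 2 - v ^ 2) ^ 2 := by rw [hq, abs_neg, mul_pow, sq_abs]; ring
    _ ≤ (m * C₀) ^ 2 * ((2 * omegaNBound A (ω k)) ^ 2 * (u - v) ^ 2) := by gcongr
    _ = (2 * m * C₀ * omegaNBound A (ω k)) ^ 2 * (u - v) ^ 2 := by ring
    _ ≤ _ := Finset.single_le_sum (f := fun j ↦ (2 * m * C₀ * omegaNBound A (ω j)) ^ 2 *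
          (omegaN ginv (ω j) x - omegaN ginv' (ω j) x) ^ 2)
          (fun j _ ↦ by positivity) (Finset.mem_univ k)

end OmegaN

theorem exists_pos_le_sq (K : ℝ) : ∃ C > 0, K ≤ C ^ 2 := by
  refine ⟨Real.sqrt |K| + 1, by positivity, ?_⟩
  nlinarith [Real.sq_sqrt (abs_nonneg K), le_abs_self K, Real.sqrt_nonneg |K|]

theorem boundary_metric_L2_stability_general {d m N : ℕ}
    (V : Set (Fin d → ℝ)) (hV : MeasurableSet V) (hVfin : volume V ≠ ⊤)
    (ginv ginv' : (Fin d → ℝ) → Matrix (Fin m) (Fin m) ℝ)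
    (hmeas : ∀ α β, Measurable fun x => ginv x α β)
    (hmeas' : ∀ α β, Measurable fun x => ginv' x α β)
    (hsym : ∀ x, (ginv x).IsSymm) (hsym' : ∀ x, (ginv' x).IsSymm)
    (A : ℝ)
    (hbound : ∀ x ∈ V, ∀ α β, |ginv x α β| ≤ A)
    (hbound' : ∀ x ∈ V, ∀ α β, |ginv' x α β| ≤ A)
    (ω : Fin N → (Fin m → ℝ))
    (c : ℝ) (hc : 0 < c)
    (hell : ∀ x ∈ V, ∀ k,
      ∑ α : Fin m, ∑ β : Fin m, ginv x α β * ω k α * ω k β ≤ 1 - c)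
    (hell' : ∀ x ∈ V, ∀ k,
      ∑ α : Fin m, ∑ β : Fin m, ginv' x α β * ω k α * ω k β ≤ 1 - c)
    (C₀ : ℝ)
    (hrecover : ∀ x ∈ V, ∀ h : Matrix (Fin m) (Fin m) ℝ, h.IsSymm →
      ∃ k, ∀ α β, |h α β| ≤ C₀ *
        |∑ α' : Fin m, ∑ β' : Fin m, h α' β' * ω k α' * ω k β'|) :
    ∃ C > 0, ∀ δ : ℝ, 0 ≤ δ →
      (∀ k, (∫ x in V, (omegaN ginv (ω k) x - omegaN ginv' (ω k) x) ^ 2) ≤ δ ^ 2) →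
      (∫ x in V, ∑ α : Fin m, ∑ β : Fin m, (ginv x α β - ginv' x α β) ^ 2) ≤
        C ^ 2 * δ ^ 2 := by
  set w : Fin N → ℝ := fun k ↦ (2 * m * C₀ * omegaNBound A (ω k)) ^ 2
  obtain ⟨C, hC, hwC⟩ := exists_pos_le_sq (∑ k, w k)
  refine ⟨C, hC, fun δ _ hδ ↦ ?_⟩
  have hint k := integrableOn_sq_sub_omegaN hV hVfin hmeas hmeas' hbound hbound' (ω k)
  have hpoint : ∀ x ∈ V, ∑ α, ∑ β, (ginv x α β - ginv' x α β) ^ 2 ≤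
      ∑ k, w k * (omegaN ginv (ω k) x - omegaN ginv' (ω k) x) ^ 2 := fun x hx ↦
    sum_sq_sub_le_sum_sq_sub_omegaN (hsym x) (hsym' x) (hbound x hx) (hbound' x hx)
      (fun k ↦ (hell x hx k).trans (sub_le_self 1 hc.le))
      (fun k ↦ (hell' x hx k).trans (sub_le_self 1 hc.le)) (hrecover x hx)
  calc (∫ x in V, ∑ α, ∑ β, (ginv x α β - ginv' x α β) ^ 2)
      ≤ ∫ x in V, ∑ k, w k * (omegaN ginv (ω k) x - omegaN ginv' (ω k) x) ^ 2 :=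
        integral_mono_of_nonneg (ae_of_all _ fun x ↦ by positivity)
          (integrable_finsetSum _ fun k _ ↦ (hint k).const_mul (w k))
          (ae_restrict_of_forall_mem hV hpoint)
    _ = ∑ k, w k * ∫ x in V, (omegaN ginv (ω k) x - omegaN ginv' (ω k) x) ^ 2 := by
        rw [integral_finsetSum _ fun k _ ↦ (hint k).const_mul (w k)]
        simp only [integral_const_mul]
    _ ≤ ∑ k, w k * δ ^ 2 := by gcongr with k; exact hδ k
    _ ≤ C ^ 2 * δ ^ 2 := by rw [← Finset.sum_mul]; gcongr

/-- if the eikonal boundary values of two metrics (in common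
boundary normal coordinates) are `L²(V)`-close within `δ` for a family of
tangential directions satisfying the directional-recovery hypothesis, then the
metrics are `L²(V)`-close within `Cδ`, with `C` depending only on a priori
bounds. -/
theorem boundary_metric_L2_stability {d m N : ℕ}
    (V : Set (Fin d → ℝ)) (hV : MeasurableSet V) (hVfin : volume V ≠ ⊤)
    (ginv ginv' : (Fin d → ℝ) → Matrix (Fin m) (Fin m) ℝ)
    (hmeas : ∀ α β, Measurable fun x => ginv x α β)
    (hmeas' : ∀ α β, Measurable fun x => ginv' x α β)
    (hsym : ∀ x, (ginv x).IsSymm) (hsym' : ∀ x, (ginv' x).IsSymm)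
    (A : ℝ) (hA : 0 < A)
    (hbound : ∀ x ∈ V, ∀ α β, |ginv x α β| ≤ A)
    (hbound' : ∀ x ∈ V, ∀ α β, |ginv' x α β| ≤ A)
    (ω : Fin N → (Fin m → ℝ))
    (c : ℝ) (hc : 0 < c)
    (hell : ∀ x ∈ V, ∀ k,
      ∑ α : Fin m, ∑ β : Fin m, ginv x α β * ω k α * ω k β ≤ 1 - c)
    (hell' : ∀ x ∈ V, ∀ k,
      ∑ α : Fin m, ∑ β : Fin m, ginv' x α β * ω k α * ω k β ≤ 1 - c)
    (C₀ : ℝ) (hC₀ : 0 < C₀)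
    (hrecover : ∀ x ∈ V, ∀ h : Matrix (Fin m) (Fin m) ℝ, h.IsSymm →
      ∃ k, ∀ α β, |h α β| ≤ C₀ *
        |∑ α' : Fin m, ∑ β' : Fin m, h α' β' * ω k α' * ω k β'|) :
    ∃ C > 0, ∀ δ : ℝ, 0 ≤ δ →
      (∀ k, (∫ x in V, (omegaN ginv (ω k) x - omegaN ginv' (ω k) x) ^ 2) ≤ δ ^ 2) →
      (∫ x in V, ∑ α : Fin m, ∑ β : Fin m, (ginv x α β - ginv' x α β) ^ 2) ≤
        C ^ 2 * δ ^ 2 :=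
  boundary_metric_L2_stability_general V hV hVfin ginv ginv' hmeas hmeas' hsym hsym' A hbound
    hbound' ω c hc hell hell' C₀ hrecover
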